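/- arXiv:2505.11914 — 3 statements merged into one kernel-verified Lean document; each statement's English description precedes it below -/
import Mathlib

section
/- Let f : ℝⁿ → ℝ be convex with L-Lipschitz continuous gradient, g₁, g₂ : ℝⁿ → ℝ convex, and E = f + g₁ − g₂. Let M be symmetric with M ⪰ I, β ∈ [0,1), x, x_prev ∈ ℝⁿ, y = x + β(x − x_prev), ξ ∈ ∂g₂(x). If x̄ minimizes z ↦ ⟨∇f(y) − ξ, z⟩ + (L/2)‖z − y‖²_M + g₁(z), then E(x̄) ≤ E(x) + (Lβ²/2)‖x − x_prev‖²_M − (L/2)‖x̄ − x‖²_M. -/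
/-!
The descent lemma bounds `f x̄` by the quadratic model of `f` at `y`, and `M ⪰ I` lets its
`(L/2)‖x̄ - y‖²` be replaced by `(L/2)‖x̄ - y‖²_M`; the subgradient inequality at `x` linearizes
`-g₂`. Up to a constant, this bounds `E x̄` by `φ x̄`. Since `φ - (L/2)‖· - y‖²_M` is convex, the
minimizer `x̄` of `φ` satisfies `φ x̄ + (L/2)‖x - x̄‖²_M ≤ φ x`, and convexity of `f` bounds `φ x`
(with the same constant) by `E x + (L/2)‖x - y‖²_M = E x + (Lβ²/2)‖x - x_prev‖²_M`.
-/

open scoped RealInnerProductSpace NNReal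
open Set

section Gradient

variable {E : Type*} [NormedAddCommGroup E] [InnerProductSpace ℝ E] [CompleteSpace E]

theorem HasGradientAt.hasDerivAt_comp_add_smul {f : E → ℝ} {g y d : E} {t : ℝ}
    (h : HasGradientAt f g (y + t • d)) :
    HasDerivAt (fun s : ℝ => f (y + s • d)) ⟪g, d⟫ t := by
  have hline : HasDerivAt (fun s : ℝ => y + s • d) d t := by
    simpa using ((hasDerivAt_id t).smul_const d).const_add y
  simpa [InnerProductSpace.toDual_apply_apply, Function.comp_def] using
    h.hasFDerivAt.comp_hasDerivAt t hline

theorem ConvexOn.add_inner_sub_le_of_hasGradientAt {f : E → ℝ} {g y : E}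
    (hf : ConvexOn ℝ univ f) (hg : HasGradientAt f g y) (x : E) :
    f y + ⟪g, x - y⟫ ≤ f x := by
  have hline : ConvexOn ℝ univ (fun t : ℝ => f (y + t • (x - y))) := by
    simpa [Function.comp_def, AffineMap.lineMap_apply, add_comm] using
      hf.comp_affineMap (AffineMap.lineMap y x)
  have hderiv : HasDerivAt (fun t : ℝ => f (y + t • (x - y))) ⟪g, x - y⟫ 0 :=
    HasGradientAt.hasDerivAt_comp_add_smul (by simpa using hg)
  have hslope := hline.le_slope_of_hasDerivAt (mem_univ 0) (mem_univ 1) one_pos hderiv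
  simp only [slope_def_field, one_smul, add_sub_cancel, zero_smul, add_zero, sub_zero, div_one]
    at hslope
  linarith

theorem le_add_inner_sub_add_of_lipschitzWith_gradient {f : E → ℝ} {f' : E → E} {K : ℝ≥0}
    (hf : ∀ z, HasGradientAt f (f' z) z) (hK : LipschitzWith K f') (y x : E) :
    f x ≤ f y + ⟪f' y, x - y⟫ + K / 2 * ‖x - y‖ ^ 2 := by
  set d := x - y
  have hderiv (t : ℝ) : HasDerivAt (fun s : ℝ => f (y + s • d)) ⟪f' (y + t • d), d⟫ t :=
    (hf _).hasDerivAt_comp_add_smul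
  have hbound (t : ℝ) (ht : 0 ≤ t) : ⟪f' (y + t • d), d⟫ ≤ ⟪f' y, d⟫ + K * t * ‖d‖ ^ 2 :=
    calc ⟪f' (y + t • d), d⟫ = ⟪f' y, d⟫ + ⟪f' (y + t • d) - f' y, d⟫ := by
          rw [inner_sub_left]; ring
      _ ≤ ⟪f' y, d⟫ + ‖f' (y + t • d) - f' y‖ * ‖d‖ := by
          gcongr; exact real_inner_le_norm _ _
      _ ≤ ⟪f' y, d⟫ + K * ‖t • d‖ * ‖d‖ := by
          gcongr
          simpa [dist_eq_norm] using hK.dist_le_mul (y + t • d) y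
      _ = ⟪f' y, d⟫ + K * t * ‖d‖ ^ 2 := by
          rw [norm_smul, Real.norm_of_nonneg ht]; ring
  have hquad (t : ℝ) :
      HasDerivAt (fun s : ℝ => f y + s * ⟪f' y, d⟫ + K / 2 * s ^ 2 * ‖d‖ ^ 2)
        (⟪f' y, d⟫ + K * t * ‖d‖ ^ 2) t := by
    have hlin := ((hasDerivAt_id t).mul_const ⟪f' y, d⟫).const_add (f y)
    have hsq := ((hasDerivAt_pow 2 t).const_mul (K / 2 : ℝ)).mul_const (‖d‖ ^ 2)
    refine (hlin.add hsq).congr_deriv ?_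
    simp only [one_mul, Nat.cast_ofNat, pow_one, Nat.add_one_sub_one]
    ring
  have hmajorant := image_le_of_deriv_right_le_deriv_boundary (a := 0) (b := 1)
    (fun t _ => (hderiv t).continuousAt.continuousWithinAt)
    (fun t _ => (hderiv t).hasDerivWithinAt) (by simp)
    (fun t _ => (hquad t).continuousAt.continuousWithinAt)
    (fun t _ => (hquad t).hasDerivWithinAt) (fun t ht => hbound t ht.1)
    (right_mem_Icc.2 zero_le_one)
  simpa [d] using hmajorant

end Gradient

section Quadratic

variable {E : Type*} [NormedAddCommGroup E] [InnerProductSpace ℝ E]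
  {M : E →ₗ[ℝ] E}

theorem LinearMap.IsSymmetric.inner_map_smul_add_smul_self (hM : M.IsSymmetric) (u v : E)
    (t : ℝ) :
    ⟪M ((1 - t) • u + t • v), (1 - t) • u + t • v⟫ =
      (1 - t) * ⟪M u, u⟫ + t * ⟪M v, v⟫ - t * (1 - t) * ⟪M (v - u), v - u⟫ := by
  have hcomm : ⟪M v, u⟫ = ⟪M u, v⟫ := by rw [hM, real_inner_comm]
  simp only [map_add, map_sub, map_smul, inner_add_left, inner_add_right, inner_sub_left,
    inner_sub_right, real_inner_smul_left, real_inner_smul_right, hcomm]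
  ring

theorem LinearMap.IsSymmetric.add_mul_inner_map_sub_le_of_convexOn_sub (hM : M.IsSymmetric)
    {φ : E → ℝ} {c : ℝ} {y a : E}
    (hconv : ConvexOn ℝ univ (fun z => φ z - c * ⟪M (z - y), z - y⟫))
    (hmin : ∀ z, φ a ≤ φ z) (b : E) :
    φ a + c * ⟪M (b - a), b - a⟫ ≤ φ b := by
  set Q := c * ⟪M (b - a), b - a⟫
  -- `φ` on the segment from `a` to `b` lies below the chord minus `t (1 - t) Q`; let `t → 0`.
  have hstep : ∀ t ∈ Ioo (0 : ℝ) 1, φ a + (1 - t) * Q ≤ φ b := by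
    rintro t ⟨ht0, ht1⟩
    have hψ := hconv.2 (mem_univ a) (mem_univ b) (sub_nonneg.2 ht1.le) ht0.le (by ring)
    have hq := hM.inner_map_smul_add_smul_self (a - y) (b - y) t
    rw [show (1 - t) • (a - y) + t • (b - y) = (1 - t) • a + t • b - y by module,
      sub_sub_sub_cancel_right] at hq
    simp only [smul_eq_mul, hq] at hψ
    have hle := hmin ((1 - t) • a + t • b)
    have : t * (φ a + (1 - t) * Q) ≤ t * φ b := by linarith
    exact le_of_mul_le_mul_left this ht0
  have hlim : Filter.Tendsto (fun t : ℝ => φ a + (1 - t) * Q) (nhdsWithin 0 (Ioi 0))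
      (nhds (φ a + Q)) := by
    have hcont : Continuous (fun t : ℝ => φ a + (1 - t) * Q) := by fun_prop
    simpa using (hcont.tendsto 0).mono_left nhdsWithin_le_nhds
  exact le_of_tendsto hlim (Filter.mem_of_superset (Ioo_mem_nhdsGT one_pos) hstep)

end Quadratic

theorem stmt_4_general {n : ℕ}
    (f g₁ g₂ : EuclideanSpace ℝ (Fin n) → ℝ)
    (f' : EuclideanSpace ℝ (Fin n) → EuclideanSpace ℝ (Fin n))
    (L : ℝ) (hL : 0 < L)
    (hf : ConvexOn ℝ Set.univ f)
    (hf' : ∀ z, HasGradientAt f (f' z) z)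
    (hLip : LipschitzWith (Real.toNNReal L) f')
    (hg₁ : ConvexOn ℝ Set.univ g₁)
    (M : EuclideanSpace ℝ (Fin n) →ₗ[ℝ] EuclideanSpace ℝ (Fin n))
    (hMsym : ∀ u v, ⟪M u, v⟫ = ⟪u, M v⟫)
    (hMgeI : ∀ v, ‖v‖ ^ 2 ≤ ⟪M v, v⟫)
    (β : ℝ)
    (x xprev xbar : EuclideanSpace ℝ (Fin n))
    (ξ : EuclideanSpace ℝ (Fin n))
    (hξ : ∀ z, g₂ x + ⟪ξ, z - x⟫ ≤ g₂ z)
    (y : EuclideanSpace ℝ (Fin n)) (hy : y = x + β • (x - xprev))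
    (φ : EuclideanSpace ℝ (Fin n) → ℝ)
    (hφ : ∀ z, φ z = ⟪f' y - ξ, z⟫ + (L / 2) * ⟪M (z - y), z - y⟫ + g₁ z)
    (hmin : ∀ z, φ xbar ≤ φ z) :
    f xbar + g₁ xbar - g₂ xbar ≤
      f x + g₁ x - g₂ x + (L * β ^ 2 / 2) * ⟪M (x - xprev), x - xprev⟫
        - (L / 2) * ⟪M (xbar - x), xbar - x⟫ := by
  have hM : M.IsSymmetric := hMsym
  set C := f y - ⟪f' y, y⟫ + ⟪ξ, x⟫ - g₂ x
  have hupper : f xbar + g₁ xbar - g₂ xbar ≤ φ xbar + C := by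
    have hdescent := le_add_inner_sub_add_of_lipschitzWith_gradient hf' hLip y xbar
    rw [Real.coe_toNNReal L hL.le] at hdescent
    have hnorm := mul_le_mul_of_nonneg_left (hMgeI (xbar - y)) (by positivity : 0 ≤ L / 2)
    have hsub := hξ xbar
    rw [inner_sub_right] at hdescent hsub
    rw [hφ, inner_sub_left]
    linarith
  have hlower : φ x + C ≤ f x + g₁ x - g₂ x + L / 2 * ⟪M (x - y), x - y⟫ := by
    have hfirst := hf.add_inner_sub_le_of_hasGradientAt (hf' y) x
    rw [inner_sub_right] at hfirst
    rw [hφ, inner_sub_left]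
    linarith
  have hgrowth : φ xbar + L / 2 * ⟪M (x - xbar), x - xbar⟫ ≤ φ x := by
    refine hM.add_mul_inner_map_sub_le_of_convexOn_sub (y := y) ?_ hmin x
    have hlin : (fun z => φ z - L / 2 * ⟪M (z - y), z - y⟫) =
        fun z => innerₗ _ (f' y - ξ) z + g₁ z := by
      ext z; rw [hφ, innerₗ_apply_apply]; ring
    rw [hlin]
    exact ((innerₗ _ (f' y - ξ)).convexOn convex_univ).add hg₁
  have hmomentum : ⟪M (x - y), x - y⟫ = β ^ 2 * ⟪M (x - xprev), x - xprev⟫ := by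
    rw [show x - y = (-β) • (x - xprev) by rw [hy]; module, map_smul, real_inner_smul_left,
      real_inner_smul_right]
    ring
  have hswap : ⟪M (x - xbar), x - xbar⟫ = ⟪M (xbar - x), xbar - x⟫ := by
    rw [← neg_sub, map_neg, inner_neg_neg]
  rw [hmomentum] at hlower
  rw [hswap] at hgrowth
  linarith

/-- Descent lemma for the linearized (explicit) proximal DC subproblem (Lemma 3). -/
theorem stmt_4 {n : ℕ}
    (f g₁ g₂ : EuclideanSpace ℝ (Fin n) → ℝ)
    (f' : EuclideanSpace ℝ (Fin n) → EuclideanSpace ℝ (Fin n))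
    (L : ℝ) (hL : 0 < L)
    (hf : ConvexOn ℝ Set.univ f)
    (hf' : ∀ z, HasGradientAt f (f' z) z)
    (hLip : LipschitzWith (Real.toNNReal L) f')
    (hg₁ : ConvexOn ℝ Set.univ g₁) (hg₂ : ConvexOn ℝ Set.univ g₂)
    (M : EuclideanSpace ℝ (Fin n) →ₗ[ℝ] EuclideanSpace ℝ (Fin n))
    (hMsym : ∀ u v, ⟪M u, v⟫ = ⟪u, M v⟫)
    (hMgeI : ∀ v, ‖v‖ ^ 2 ≤ ⟪M v, v⟫)
    (β : ℝ) (hβ0 : 0 ≤ β) (hβ1 : β < 1)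
    (x xprev xbar : EuclideanSpace ℝ (Fin n))
    (ξ : EuclideanSpace ℝ (Fin n))
    (hξ : ∀ z, g₂ x + ⟪ξ, z - x⟫ ≤ g₂ z)
    (y : EuclideanSpace ℝ (Fin n)) (hy : y = x + β • (x - xprev))
    (φ : EuclideanSpace ℝ (Fin n) → ℝ)
    (hφ : ∀ z, φ z = ⟪f' y - ξ, z⟫ + (L / 2) * ⟪M (z - y), z - y⟫ + g₁ z)
    (hmin : ∀ z, φ xbar ≤ φ z) :
    f xbar + g₁ xbar - g₂ xbar ≤
      f x + g₁ x - g₂ x + (L * β ^ 2 / 2) * ⟪M (x - xprev), x - xprev⟫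
        - (L / 2) * ⟪M (xbar - x), xbar - x⟫ :=
  stmt_4_general f g₁ g₂ f' L hL hf hf' hLip hg₁ M hMsym hMgeI β x xprev xbar ξ hξ y hy φ hφ hmin
end

section
/- The anisotropic ℓ₁-norm h(x) = ‖x‖₁ = Σᵢ |xᵢ| on ℝⁿ satisfies: for every x̄ ∈ ℝⁿ and every σ > 0, there exists ε > 0 such that for all x with ‖x − x̄‖ < ε, there is a subgradient w̄ ∈ ∂‖·‖₁(x̄) (with w̄ᵢ = sign(x̄ᵢ) if x̄ᵢ ≠ 0 and w̄ᵢ = sign(xᵢ) if x̄ᵢ = 0) satisfying ‖x‖₁ ≤ ‖x̄‖₁ + ⟨x − x̄, w̄⟩ + (σ/2)‖x − x̄‖². -/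
/-!
Near `x̄` every coordinate keeps its sign wherever `x̄ᵢ ≠ 0`, so the choice `w = sign x` agrees
with `sign x̄` on the support of `x̄` and is a subgradient of `‖·‖₁` at `x̄`. Coordinatewise,
`|xᵢ| = xᵢ sign xᵢ` and `x̄ᵢ sign xᵢ = |x̄ᵢ|`, so the ℓ₁-norm is even exactly affine,
`‖x‖₁ = ‖x̄‖₁ + ⟨x - x̄, w⟩`, and the quadratic term is pure slack.
-/

open Filter Topology Finset

namespace Real

lemma sign_mul_self_eq_abs (r : ℝ) : sign r * r = |r| := by
  rcases lt_trichotomy r 0 with h | rfl | h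
  · rw [sign_of_neg h, abs_of_neg h, neg_one_mul]
  · simp
  · rw [sign_of_pos h, abs_of_pos h, one_mul]

lemma abs_sign_le_one (r : ℝ) : |sign r| ≤ 1 := by
  rcases sign_apply_eq r with h | h | h <;> simp [h]

lemma eventually_sign_eq {a : ℝ} (ha : a ≠ 0) : ∀ᶠ b in 𝓝 a, sign b = sign a := by
  rcases ha.lt_or_gt with h | h
  · exact (eventually_lt_nhds h).mono fun b hb => by rw [sign_of_neg hb, sign_of_neg h]
  · exact (eventually_gt_nhds h).mono fun b hb => by rw [sign_of_pos hb, sign_of_pos h]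

end Real

lemma EuclideanSpace.eventually_sign_apply_eq {ι : Type*} [Fintype ι]
    (xbar : EuclideanSpace ℝ ι) :
    ∀ᶠ x in 𝓝 xbar, ∀ i, xbar i ≠ 0 → Real.sign (x i) = Real.sign (xbar i) := by
  refine eventually_all.2 fun i => ?_
  by_cases h : xbar i = 0
  · exact Eventually.of_forall fun _ h' => absurd h h'
  · exact ((PiLp.continuous_apply 2 _ i).tendsto xbar).eventually (Real.eventually_sign_eq h)
      |>.mono fun _ hx _ => hx

/-- The anisotropic ℓ₁-norm on ℝⁿ satisfies the local upper quadratic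
subgradient bound (Assumption 1). -/
theorem stmt_7 {n : ℕ} :
    ∀ (xbar : EuclideanSpace ℝ (Fin n)) (σ : ℝ), 0 < σ →
      ∃ ε > 0, ∀ x : EuclideanSpace ℝ (Fin n), ‖x - xbar‖ < ε →
        ∃ w : EuclideanSpace ℝ (Fin n),
          (∀ i, |w i| ≤ 1) ∧
          (∑ i, w i * xbar i = ∑ i, |xbar i|) ∧
          (∀ i, xbar i ≠ 0 → w i = Real.sign (xbar i)) ∧
          (∀ i, xbar i = 0 → w i = Real.sign (x i)) ∧
          (∑ i, |x i|) ≤ (∑ i, |xbar i|) + (∑ i, (x i - xbar i) * w i)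
            + (σ / 2) * ‖x - xbar‖ ^ 2 := by
  intro xbar σ hσ
  obtain ⟨ε, hε, hsign⟩ := Metric.eventually_nhds_iff.1 xbar.eventually_sign_apply_eq
  refine ⟨ε, hε, fun x hx => ?_⟩
  have hx_sign := hsign (by rwa [dist_eq_norm])
  have hmul (i : Fin n) : Real.sign (x i) * xbar i = |xbar i| := by
    by_cases h : xbar i = 0
    · simp [h]
    · rw [hx_sign i h, Real.sign_mul_self_eq_abs]
  have haffine : ∑ i, |x i| = ∑ i, |xbar i| + ∑ i, (x i - xbar i) * Real.sign (x i) := by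
    rw [← sum_add_distrib]
    refine sum_congr rfl fun i _ => ?_
    linarith [hmul i, Real.sign_mul_self_eq_abs (x i)]
  refine ⟨WithLp.toLp 2 fun i => Real.sign (x i), fun i => Real.abs_sign_le_one _,
    sum_congr rfl fun i _ => hmul i, hx_sign, fun _ _ => rfl, ?_⟩
  have : 0 ≤ σ / 2 * ‖x - xbar‖ ^ 2 := by positivity
  linarith
end

section
/- Let ψ : [0, ν) → [0, ∞) be continuous, concave, continuously differentiable on (0, ν) with ψ' > 0 and ψ(0) = 0. Let (A_n) be a nonincreasing sequence in (ζ, ζ + ν) converging to ζ. Suppose there exist constants C₁ > 0, C > 0 and nonnegative reals (a_n) such that for all n: A_n − A_{n+1} ≥ C₁ a_n² and ψ'(A_n − ζ)·C·(a_{n+1} + a_n) ≥ 1. Then with C̃ = C/C₁, for all n: a_n² ≤ C̃ · (ψ(A_n − ζ) − ψ(A_{n+1} − ζ)) · (a_{n+1} + a_n), and consequently Σ_n a_n < ∞. -/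
/-- a² ≤ c·d with everything nonneg implies a ≤ c + d/4. -/
lemma aux_sq_le (a c d : ℝ) (ha : 0 ≤ a) (hc : 0 ≤ c) (hd : 0 ≤ d)
    (h : a ^ 2 ≤ c * d) : a ≤ c + d / 4 := by
  nlinarith [sq_nonneg (c - d / 4), sq_nonneg a]

/-- Abstract KL-telescoping lemma underlying Theorem 3(iv). -/
theorem stmt_10 (ν : ℝ) (hν : 0 < ν)
    (ψ ψ' : ℝ → ℝ)
    (hcont : ContinuousOn ψ (Set.Ico 0 ν))
    (hnonneg : ∀ s ∈ Set.Ico (0 : ℝ) ν, 0 ≤ ψ s)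
    (hconc : ConcaveOn ℝ (Set.Ico 0 ν) ψ)
    (hderiv : ∀ s ∈ Set.Ioo (0 : ℝ) ν, HasDerivAt ψ (ψ' s) s)
    (hψ'pos : ∀ s ∈ Set.Ioo (0 : ℝ) ν, 0 < ψ' s)
    (hψ0 : ψ 0 = 0)
    (A : ℕ → ℝ) (ζ : ℝ)
    (hmono : Antitone A)
    (hrange : ∀ n, ζ < A n ∧ A n < ζ + ν)
    (hlim : Filter.Tendsto A Filter.atTop (nhds ζ))
    (a : ℕ → ℝ) (ha : ∀ n, 0 ≤ a n)
    (C₁ C : ℝ) (hC₁ : 0 < C₁) (hC : 0 < C)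
    (hdec : ∀ n, C₁ * (a n) ^ 2 ≤ A n - A (n + 1))
    (hKL : ∀ n, 1 ≤ ψ' (A n - ζ) * (C * (a (n + 1) + a n))) :
    (∀ n, (a n) ^ 2 ≤
      (C / C₁) * (ψ (A n - ζ) - ψ (A (n + 1) - ζ)) * (a (n + 1) + a n)) ∧
    Summable a := by
  -- basic facts about t_n := A n - ζ
  have htpos : ∀ n, 0 < A n - ζ := fun n => by linarith [(hrange n).1]
  have htlt : ∀ n, A n - ζ < ν := fun n => by linarith [(hrange n).2]
  have htIoo : ∀ n, A n - ζ ∈ Set.Ioo (0 : ℝ) ν := fun n => ⟨htpos n, htlt n⟩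
  have htIco : ∀ n, A n - ζ ∈ Set.Ico (0 : ℝ) ν := fun n => ⟨(htpos n).le, htlt n⟩
  -- concavity: ψ'(t_n) * (t_n - t_{n+1}) ≤ ψ(t_n) - ψ(t_{n+1})
  have hkey : ∀ n, ψ' (A n - ζ) * (A n - A (n + 1)) ≤ ψ (A n - ζ) - ψ (A (n + 1) - ζ) := by
    intro n
    rcases eq_or_lt_of_le (hmono (Nat.le_succ n)) with heq | hlt
    · rw [heq]; simp
    · have := hconc.le_slope_of_hasDerivAt (htIco (n + 1)) (htIco n)
        (by linarith) (hderiv _ (htIoo n))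
      rw [slope_def_field, le_div_iff₀ (by linarith)] at this
      calc ψ' (A n - ζ) * (A n - A (n + 1))
          = ψ' (A n - ζ) * ((A n - ζ) - (A (n + 1) - ζ)) := by ring
        _ ≤ ψ (A n - ζ) - ψ (A (n + 1) - ζ) := this
  -- the main pointwise inequality
  have hmain : ∀ n, (a n) ^ 2 ≤
      (C / C₁) * (ψ (A n - ζ) - ψ (A (n + 1) - ζ)) * (a (n + 1) + a n) := by
    intro n
    have hψ' := hψ'pos _ (htIoo n)
    have h1 : C₁ * (a n) ^ 2 * ψ' (A n - ζ) ≤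
        (ψ (A n - ζ) - ψ (A (n + 1) - ζ)) := by
      calc C₁ * (a n) ^ 2 * ψ' (A n - ζ) ≤ (A n - A (n + 1)) * ψ' (A n - ζ) :=
            mul_le_mul_of_nonneg_right (hdec n) hψ'.le
        _ ≤ _ := by rw [mul_comm]; exact hkey n
    have h2 := hKL n
    -- multiply h1 by C*(a(n+1)+a n) ≥ 0 and use h2
    have hsum : 0 ≤ a (n + 1) + a n := by linarith [ha n, ha (n + 1)]
    rw [div_mul_eq_mul_div, div_mul_eq_mul_div, le_div_iff₀ hC₁]
    nlinarith [mul_le_mul_of_nonneg_right h1 (mul_nonneg hC.le hsum),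
      mul_le_mul_of_nonneg_right h2 (mul_nonneg hC₁.le (sq_nonneg (a n)))]
  refine ⟨hmain, ?_⟩
  -- nonnegativity and monotonicity of b n := ψ (A n - ζ)
  set K := C / C₁ with hK
  have hKpos : 0 < K := div_pos hC hC₁
  have hbnonneg : ∀ n, 0 ≤ ψ (A n - ζ) := fun n => hnonneg _ (htIco n)
  have hbdiff : ∀ n, 0 ≤ ψ (A n - ζ) - ψ (A (n + 1) - ζ) := by
    intro n
    have := hkey n
    have h3 : 0 ≤ A n - A (n + 1) := by linarith [hmono (Nat.le_succ n)]
    nlinarith [(hψ'pos _ (htIoo n))]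
  -- a n ≤ K * (b n - b (n+1)) + (a (n+1) + a n)/4
  have hstep : ∀ n, a n ≤ K * (ψ (A n - ζ) - ψ (A (n + 1) - ζ)) + (a (n + 1) + a n) / 4 := by
    intro n
    exact aux_sq_le _ _ _ (ha n) (mul_nonneg hKpos.le (hbdiff n))
      (by linarith [ha n, ha (n + 1)]) (hmain n)
  -- uniform bound on a n
  have habd : ∀ n, a n ≤ Real.sqrt ((A 0 - ζ) / C₁) := by
    intro n
    have h1 : (a n) ^ 2 ≤ (A 0 - ζ) / C₁ := by
      rw [le_div_iff₀ hC₁]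
      have h2 : A n ≤ A 0 := hmono (Nat.zero_le n)
      have h3 : ζ < A (n + 1) := (hrange (n + 1)).1
      nlinarith [hdec n]
    calc a n = Real.sqrt ((a n) ^ 2) := by rw [Real.sqrt_sq (ha n)]
      _ ≤ _ := Real.sqrt_le_sqrt h1
  set M := Real.sqrt ((A 0 - ζ) / C₁) with hM
  -- partial sums bounded
  have hbound : ∀ N, ∑ n ∈ Finset.range N, a n ≤ 2 * K * ψ (A 0 - ζ) + M / 2 := by
    intro N
    have hMnn : 0 ≤ M := Real.sqrt_nonneg _
    have hsum := Finset.sum_le_sum (fun n (_ : n ∈ Finset.range N) => hstep n)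
    have htel : ∑ n ∈ Finset.range N, (K * (ψ (A n - ζ) - ψ (A (n + 1) - ζ))) =
        K * (ψ (A 0 - ζ) - ψ (A N - ζ)) := by
      rw [← Finset.mul_sum, Finset.sum_range_sub']
    have hshift : ∑ n ∈ Finset.range N, a (n + 1) =
        (∑ n ∈ Finset.range N, a n) + a N - a 0 := by
      have h1 := Finset.sum_range_succ' a N
      have h2 := Finset.sum_range_succ a N
      linarith
    set S := ∑ n ∈ Finset.range N, a n with hS
    have hSsum : S ≤ K * (ψ (A 0 - ζ) - ψ (A N - ζ)) + (S + a N - a 0 + S) / 4 := by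
      calc S ≤ ∑ n ∈ Finset.range N,
            (K * (ψ (A n - ζ) - ψ (A (n + 1) - ζ)) + (a (n + 1) + a n) / 4) := hsum
        _ = K * (ψ (A 0 - ζ) - ψ (A N - ζ)) + (S + a N - a 0 + S) / 4 := by
            rw [Finset.sum_add_distrib, htel, ← Finset.sum_div, Finset.sum_add_distrib,
              hshift]
    nlinarith [mul_nonneg hKpos.le (hbnonneg N), ha 0, habd N, hSsum]
  exact summable_of_sum_range_le ha hbound
end
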